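/- Let A, E, F : (0, ρ₀] → [0, ∞) satisfy, for all γ, θ ∈ (0, 1/3] and ρ with γθρ ≤ ρ₀: F(γθρ) ≤ N γ^{-2} θ² A(ρ) + γ^{20/7} θ^{-2} F(ρ) + N γ^{-2} θ^{-3} (A(ρ)+E(ρ)+F(ρ))^{3/2} and A(γθρ) + E(γθρ) ≤ (γθ)² A(ρ) + (γθ)^{-3} (A(ρ)+E(ρ)+F(ρ))^{3/2}. Then there exist θ₁ ∈ (0,1) and a constant N(θ₁) such that A(θ₁ρ) + E(θ₁ρ) + F(θ₁ρ) ≤ (1/2)(A(ρ)+E(ρ)+F(ρ)) + N(θ₁)(A(ρ)+E(ρ)+F(ρ))^{3/2} for all admissible ρ. -/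
import Mathlib


/-- One-step decay from the two scaled inequalities: if for all
`γ, θ ∈ (0,1/3]` and admissible `ρ`,
`F(γθρ) ≤ N γ^{-2} θ² A(ρ) + γ^{20/7} θ^{-2} F(ρ) + N γ^{-2} θ^{-3} (A+E+F)(ρ)^{3/2}` and
`A(γθρ) + E(γθρ) ≤ (γθ)² A(ρ) + (γθ)^{-3} (A+E+F)(ρ)^{3/2}`, then there exist
`θ₁ ∈ (0,1)` and `N(θ₁)` with
`(A+E+F)(θ₁ρ) ≤ (1/2)(A+E+F)(ρ) + N(θ₁) (A+E+F)(ρ)^{3/2}`. -/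
theorem stmt10 (ρ₀ N : ℝ) (hρ₀ : 0 < ρ₀) (hN : 0 < N) (A E F : ℝ → ℝ)
    (hA : ∀ ρ ∈ Set.Ioc (0 : ℝ) ρ₀, 0 ≤ A ρ)
    (hE : ∀ ρ ∈ Set.Ioc (0 : ℝ) ρ₀, 0 ≤ E ρ)
    (hF : ∀ ρ ∈ Set.Ioc (0 : ℝ) ρ₀, 0 ≤ F ρ)
    (hF' : ∀ γ ∈ Set.Ioc (0 : ℝ) (1 / 3), ∀ θ ∈ Set.Ioc (0 : ℝ) (1 / 3),
      ∀ ρ ∈ Set.Ioc (0 : ℝ) ρ₀,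
        F (γ * θ * ρ) ≤ N * γ ^ (-2 : ℝ) * θ ^ 2 * A ρ
          + γ ^ (20 / 7 : ℝ) * θ ^ (-2 : ℝ) * F ρ
          + N * γ ^ (-2 : ℝ) * θ ^ (-3 : ℝ) * (A ρ + E ρ + F ρ) ^ (3 / 2 : ℝ))
    (hAE : ∀ γ ∈ Set.Ioc (0 : ℝ) (1 / 3), ∀ θ ∈ Set.Ioc (0 : ℝ) (1 / 3),
      ∀ ρ ∈ Set.Ioc (0 : ℝ) ρ₀,
        A (γ * θ * ρ) + E (γ * θ * ρ) ≤ (γ * θ) ^ 2 * A ρ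
          + (γ * θ) ^ (-3 : ℝ) * (A ρ + E ρ + F ρ) ^ (3 / 2 : ℝ)) :
    ∃ θ₁ ∈ Set.Ioo (0 : ℝ) 1, ∃ N₁ : ℝ, 0 < N₁ ∧
      ∀ ρ ∈ Set.Ioc (0 : ℝ) ρ₀,
        A (θ₁ * ρ) + E (θ₁ * ρ) + F (θ₁ * ρ)
          ≤ (1 / 2) * (A ρ + E ρ + F ρ) + N₁ * (A ρ + E ρ + F ρ) ^ (3 / 2 : ℝ) := by
  set s : ℝ := min (1 / 6) (1 / (6 * N)) with hs_def
  have hs0 : 0 < s := lt_min (by norm_num) (by positivity)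
  have hs16 : s ≤ 1 / 6 := min_le_left _ _
  have hsN : s ≤ 1 / (6 * N) := min_le_right _ _
  have hs1 : s ≤ 1 := hs16.trans (by norm_num)
  set γ : ℝ := s ^ 4 with hγ_def
  set θ : ℝ := s ^ 5 with hθ_def
  have hγ0 : 0 < γ := by positivity
  have hθ0 : 0 < θ := by positivity
  have hγm : γ ∈ Set.Ioc (0 : ℝ) (1 / 3) := by
    refine ⟨hγ0, ?_⟩
    have : s ^ 4 ≤ s ^ 1 := pow_le_pow_of_le_one hs0.le hs1 (by norm_num)
    simp only [pow_one] at this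
    linarith
  have hθm : θ ∈ Set.Ioc (0 : ℝ) (1 / 3) := by
    refine ⟨hθ0, ?_⟩
    have : s ^ 5 ≤ s ^ 1 := pow_le_pow_of_le_one hs0.le hs1 (by norm_num)
    simp only [pow_one] at this
    linarith
  -- rewrite rpow of γ, θ in terms of rpow of s
  have hγr : ∀ x : ℝ, γ ^ x = s ^ (4 * x) := by
    intro x
    rw [hγ_def, ← Real.rpow_natCast s 4, ← Real.rpow_mul hs0.le]
    norm_num
  have hθr : ∀ x : ℝ, θ ^ x = s ^ (5 * x) := by
    intro x
    rw [hθ_def, ← Real.rpow_natCast s 5, ← Real.rpow_mul hs0.le]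
    norm_num
  -- coefficient bounds
  have hc1 : N * γ ^ (-2 : ℝ) * θ ^ 2 ≤ 1 / 6 := by
    have h1 : γ ^ (-2 : ℝ) = s ^ (-8 : ℝ) := by rw [hγr]; norm_num
    have h2 : (θ : ℝ) ^ 2 = s ^ (10 : ℝ) := by
      rw [hθ_def, ← pow_mul, ← Real.rpow_natCast s 10]; norm_num
    rw [h1, h2, mul_assoc, ← Real.rpow_add hs0]
    norm_num
    have hNs : N * s ≤ 1 / 6 := by
      rw [le_div_iff₀ (by positivity)] at hsN
      linarith
    nlinarith [mul_le_mul_of_nonneg_left (show s ^ 2 ≤ s by nlinarith) hN.le]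
  have hc2 : γ ^ (20 / 7 : ℝ) * θ ^ (-2 : ℝ) ≤ 1 / 6 := by
    rw [hγr, hθr, ← Real.rpow_add hs0]
    have h3 : s ^ (4 * (20 / 7) + 5 * (-2) : ℝ) ≤ s ^ (1 : ℝ) :=
      Real.rpow_le_rpow_of_exponent_ge hs0 hs1 (by norm_num)
    rw [Real.rpow_one] at h3
    linarith
  have hc3 : (γ * θ) ^ 2 ≤ 1 / 6 := by
    have : γ * θ = s ^ 9 := by rw [hγ_def, hθ_def]; ring
    rw [this, ← pow_mul]
    have h3 : s ^ 18 ≤ s ^ 1 := pow_le_pow_of_le_one hs0.le hs1 (by norm_num)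
    simp only [pow_one] at h3
    linarith
  refine ⟨γ * θ, ⟨by positivity, ?_⟩, (γ * θ) ^ (-3 : ℝ) + N * γ ^ (-2 : ℝ) * θ ^ (-3 : ℝ),
    by positivity, ?_⟩
  · have h1 : γ * θ ≤ 1 / 3 * (1 / 3) :=
      mul_le_mul hγm.2 hθm.2 hθ0.le (by norm_num)
    linarith
  intro ρ hρ
  have hX0 : 0 ≤ A ρ + E ρ + F ρ := by
    have := hA ρ hρ; have := hE ρ hρ; have := hF ρ hρ; linarith
  have hX320 : 0 ≤ (A ρ + E ρ + F ρ) ^ (3 / 2 : ℝ) := Real.rpow_nonneg hX0 _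
  have h1 := hF' γ hγm θ hθm ρ hρ
  have h2 := hAE γ hγm θ hθm ρ hρ
  have hAρ := hA ρ hρ
  have hEρ := hE ρ hρ
  have hFρ := hF ρ hρ
  have t1 : N * γ ^ (-2 : ℝ) * θ ^ 2 * A ρ ≤ 1 / 6 * A ρ :=
    mul_le_mul_of_nonneg_right hc1 hAρ
  have t2 : γ ^ (20 / 7 : ℝ) * θ ^ (-2 : ℝ) * F ρ ≤ 1 / 6 * F ρ :=
    mul_le_mul_of_nonneg_right hc2 hFρ
  have t3 : (γ * θ) ^ 2 * A ρ ≤ 1 / 6 * A ρ :=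
    mul_le_mul_of_nonneg_right hc3 hAρ
  calc A (γ * θ * ρ) + E (γ * θ * ρ) + F (γ * θ * ρ)
      ≤ ((γ * θ) ^ 2 * A ρ + (γ * θ) ^ (-3 : ℝ) * (A ρ + E ρ + F ρ) ^ (3 / 2 : ℝ))
        + (N * γ ^ (-2 : ℝ) * θ ^ 2 * A ρ + γ ^ (20 / 7 : ℝ) * θ ^ (-2 : ℝ) * F ρ
          + N * γ ^ (-2 : ℝ) * θ ^ (-3 : ℝ) * (A ρ + E ρ + F ρ) ^ (3 / 2 : ℝ)) := by
        linarith
    _ ≤ (1 / 2) * (A ρ + E ρ + F ρ)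
        + ((γ * θ) ^ (-3 : ℝ) + N * γ ^ (-2 : ℝ) * θ ^ (-3 : ℝ))
          * (A ρ + E ρ + F ρ) ^ (3 / 2 : ℝ) := by
        nlinarith [t1, t2, t3]
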